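/- Let X be a nonnegative random variable and V a monotone capacity, and let aₙ = √(2n·log log n) where log x = ln(max(x, e)). Then for any fixed δ > 0, the series Σₙ V(X ≥ δ·aₙ) converges if and only if the Choquet integral C_V[X²/(log log X)] = ∫₀^∞ V(X²/(log log X) > t) dt is finite. -/

import Mathlib

open ENNReal MeasureTheory

/-- `llog x = ln (max x e)`. -/
noncomputable def llog (x : ℝ) : ℝ := Real.log (max x (Real.exp 1))

/-- `a n = sqrt (2 n log log n)`. -/
noncomputable def lilSeq (n : ℕ) : ℝ := Real.sqrt (2 * n * llog (llog n))

/-!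
Write `Y = X² / log log X`. Since `log log n ≤ 2 log log √n`, there are constants `0 < b < a`
with `{Y > a n} ⊆ {X ≥ δ aₙ} ⊆ {Y > b n}` for all `n ≥ 1`. The function `t ↦ V (Y > t)` is
antitone, so by the integral test and the substitution `t = c s`, the series `∑ V (Y > c n)`
converges for some (equivalently every) `c > 0` exactly when `∫₀^∞ V (Y > t) dt` is finite.
-/

open Set Filter

lemma one_le_llog (x : ℝ) : 1 ≤ llog x := by
  simpa [llog] using Real.log_le_log (Real.exp_pos 1) (le_max_right x (Real.exp 1))

lemma llog_pos (x : ℝ) : 0 < llog x := one_pos.trans_le (one_le_llog x)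

lemma llog_mono : Monotone llog := fun _ _ hxy =>
  Real.log_le_log ((Real.exp_pos 1).trans_le (le_max_right _ _)) (max_le_max hxy le_rfl)

lemma llog_le_self {y : ℝ} (hy : 1 ≤ y) : llog y ≤ y := by
  rcases le_total y (Real.exp 1) with h | h
  · rwa [llog, max_eq_right h, Real.log_exp]
  · rw [llog, max_eq_left h]
    linarith [Real.log_le_sub_one_of_pos (one_pos.trans_le hy)]

lemma llog_le_two_mul_of_le_sq {x y : ℝ} (h : max x (Real.exp 1) ≤ max y (Real.exp 1) ^ 2) :
    llog x ≤ 2 * llog y := by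
  have := Real.log_le_log ((Real.exp_pos 1).trans_le (le_max_right _ _)) h
  rwa [Real.log_pow, Nat.cast_ofNat] at this

lemma two_le_max_exp_one (x : ℝ) : 2 ≤ max x (Real.exp 1) := by
  linarith [Real.add_one_le_exp 1, le_max_right x (Real.exp 1)]

lemma llog_le_two_mul_llog_sqrt (x : ℝ) : llog x ≤ 2 * llog √x := by
  apply llog_le_two_mul_of_le_sq
  have hm := two_le_max_exp_one √x
  refine max_le ?_ (by nlinarith [le_max_right √x (Real.exp 1)])
  rcases le_total 0 x with hx | hx
  · calc x = √x ^ 2 := (Real.sq_sqrt hx).symm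
      _ ≤ _ := pow_le_pow_left₀ (Real.sqrt_nonneg x) (le_max_left _ _) 2
  · exact hx.trans (sq_nonneg _)

lemma llog_two_mul_le (u : ℝ) : llog (2 * u) ≤ 2 * llog u := by
  apply llog_le_two_mul_of_le_sq
  have hm := two_le_max_exp_one u
  exact max_le (by nlinarith [le_max_left u (Real.exp 1)])
    (by nlinarith [le_max_right u (Real.exp 1)])

lemma llog_llog_le_two_mul_llog_llog_sqrt (x : ℝ) : llog (llog x) ≤ 2 * llog (llog √x) :=
  (llog_mono (llog_le_two_mul_llog_sqrt x)).trans (llog_two_mul_le _)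

lemma sq_lilSeq (n : ℕ) : lilSeq n ^ 2 = 2 * n * llog (llog n) :=
  Real.sq_sqrt (mul_nonneg (by positivity) (llog_pos _).le)

lemma mul_lilSeq_le_of_mul_lt {δ x : ℝ} (hx : 0 ≤ x) {n : ℕ}
    (h : max 1 (4 * δ ^ 2) * n < x ^ 2 / llog (llog x)) : δ * lilSeq n ≤ x := by
  have hL := one_le_llog (llog x)
  rw [lt_div_iff₀ (llog_pos _)] at h
  have hn : (n : ℝ) ≤ x ^ 2 :=
    calc (n : ℝ) = 1 * n * 1 := by ring
      _ ≤ max 1 (4 * δ ^ 2) * n * llog (llog x) := by gcongr; exact le_max_left _ _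
      _ ≤ x ^ 2 := h.le
  have hsqrt : √(n : ℝ) ≤ x := by simpa [Real.sqrt_sq hx] using Real.sqrt_le_sqrt hn
  have hLn : llog (llog n) ≤ 2 * llog (llog x) :=
    (llog_llog_le_two_mul_llog_llog_sqrt n).trans (by gcongr; exact llog_mono (llog_mono hsqrt))
  have hsq : (δ * lilSeq n) ^ 2 ≤ x ^ 2 := by
    rw [mul_pow, sq_lilSeq]
    calc δ ^ 2 * (2 * n * llog (llog n)) ≤ δ ^ 2 * (2 * n * (2 * llog (llog x))) := by gcongr
      _ = 4 * δ ^ 2 * n * llog (llog x) := by ring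
      _ ≤ max 1 (4 * δ ^ 2) * n * llog (llog x) := by gcongr; exact le_max_right _ _
      _ ≤ x ^ 2 := h.le
  exact (le_abs_self _).trans (abs_le_of_sq_le_sq hsq hx)

lemma mul_lt_sq_div_of_mul_lilSeq_le {δ x : ℝ} (hδ : 0 < δ) {n : ℕ} (hn : 1 ≤ n)
    (h : δ * lilSeq n ≤ x) : min 1 (2 * δ ^ 2) / 2 * n < x ^ 2 / llog (llog x) := by
  have hn' : (1 : ℝ) ≤ n := by exact_mod_cast hn
  have hsq : 2 * δ ^ 2 * n * llog (llog n) ≤ x ^ 2 := by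
    have h2 : (δ * lilSeq n) ^ 2 ≤ x ^ 2 :=
      pow_le_pow_left₀ (mul_nonneg hδ.le (Real.sqrt_nonneg _)) h 2
    rw [mul_pow, sq_lilSeq] at h2
    linarith
  have key : min 1 (2 * δ ^ 2) * n ≤ x ^ 2 / llog (llog x) := by
    rcases le_total x n with hxn | hnx
    · calc min 1 (2 * δ ^ 2) * n ≤ 2 * δ ^ 2 * n := by gcongr; exact min_le_right _ _
        _ ≤ x ^ 2 / llog (llog n) := by rw [le_div_iff₀ (llog_pos _)]; linarith
        _ ≤ x ^ 2 / llog (llog x) :=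
          div_le_div_of_nonneg_left (sq_nonneg x) (llog_pos _) (llog_mono (llog_mono hxn))
    · have hx : 1 ≤ x := hn'.trans hnx
      calc min 1 (2 * δ ^ 2) * n ≤ 1 * x :=
            mul_le_mul (min_le_left _ _) hnx (by positivity) zero_le_one
        _ = x ^ 2 / x := by field_simp
        _ ≤ x ^ 2 / llog (llog x) := div_le_div_of_nonneg_left (sq_nonneg x) (llog_pos _)
          ((llog_le_self (one_le_llog x)).trans (llog_le_self hx))
  have hmin : 0 < min 1 (2 * δ ^ 2) := by positivity
  exact (mul_lt_mul_of_pos_right (half_lt_self hmin) (by positivity)).trans_le key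

lemma ENNReal.tsum_ne_top_of_eventually_le {f g : ℕ → ℝ≥0∞} (hf : ∀ n, f n ≠ ⊤)
    (hfg : ∀ᶠ n in atTop, f n ≤ g n) (hg : ∑' n, g n ≠ ⊤) : ∑' n, f n ≠ ⊤ := by
  obtain ⟨N, hN⟩ := eventually_atTop.1 hfg
  rw [← ENNReal.summable.sum_add_tsum_nat_add' (k := N)]
  refine ENNReal.add_ne_top.2 ⟨ENNReal.sum_ne_top.2 fun n _ => hf n, ne_top_of_le_ne_top hg ?_⟩
  calc ∑' n, f (n + N) ≤ ∑' n, g (n + N) := ENNReal.tsum_le_tsum fun n => hN _ (Nat.le_add_left N n)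
    _ ≤ ∑' n, g n := ENNReal.tsum_comp_le_tsum_of_injective (add_left_injective N) g

lemma setLIntegral_Ioi_zero_eq_tsum_Ioc (f : ℝ → ℝ≥0∞) :
    ∫⁻ t in Ioi 0, f t = ∑' n : ℕ, ∫⁻ t in Ioc (n : ℝ) (n + 1), f t := by
  have hU : ⋃ n : ℕ, Ioc (n : ℝ) (n + 1) = Ioi 0 := by
    simpa using iUnion_Ioc_map_succ_eq_Ioi (f := (Nat.cast : ℕ → ℝ)) (fun n => by simp)
      (fun ⟨b, hb⟩ => by obtain ⟨n, hn⟩ := exists_nat_gt b; exact (hb ⟨n, rfl⟩).not_gt hn)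
  rw [← hU, lintegral_iUnion (fun _ => measurableSet_Ioc)]
  simpa using Nat.mono_cast.pairwise_disjoint_on_Ioc_succ (β := ℝ)

lemma setLIntegral_Ioi_zero_comp_mul_left (g : ℝ → ℝ≥0∞) {c : ℝ} (hc : 0 < c) :
    ∫⁻ t in Ioi 0, g (c * t) = ENNReal.ofReal c⁻¹ * ∫⁻ t in Ioi 0, g t := by
  have hemb : MeasurableEmbedding (c * ·) := (Homeomorph.mulLeft₀ c hc.ne').measurableEmbedding
  have hpre : (c * ·) ⁻¹' Ioi (0 : ℝ) = Ioi 0 := by ext; simp [mul_pos_iff_of_pos_left hc]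
  calc ∫⁻ t in Ioi 0, g (c * t) = ∫⁻ t in (c * ·) ⁻¹' Ioi 0, g (c * t) := by rw [hpre]
    _ = ∫⁻ t in Ioi 0, g t ∂(volume.map (c * ·)) := by rw [hemb.restrict_map, hemb.lintegral_map]
    _ = ENNReal.ofReal c⁻¹ * ∫⁻ t in Ioi 0, g t := by
      rw [Real.map_volume_mul_left hc.ne', setLIntegral_smul_measure, abs_of_pos (inv_pos.2 hc),
        smul_eq_mul]

section Antitone

variable {g : ℝ → ℝ≥0∞}

lemma Antitone.setLIntegral_Ioc_add_one_le (hg : Antitone g) (x : ℝ) :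
    ∫⁻ t in Ioc x (x + 1), g t ≤ g x :=
  calc ∫⁻ t in Ioc x (x + 1), g t ≤ ∫⁻ _ in Ioc x (x + 1), g x :=
        setLIntegral_mono measurable_const fun _ ht => hg ht.1.le
    _ = g x := by simp

lemma Antitone.le_setLIntegral_Ioc_add_one (hg : Antitone g) (x : ℝ) :
    g (x + 1) ≤ ∫⁻ t in Ioc x (x + 1), g t :=
  calc g (x + 1) = ∫⁻ _ in Ioc x (x + 1), g (x + 1) := by simp
    _ ≤ ∫⁻ t in Ioc x (x + 1), g t := setLIntegral_mono hg.measurable fun _ ht => hg ht.2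

lemma Antitone.setLIntegral_Ioi_ne_top_iff_tsum (hg : Antitone g) (h0 : g 0 ≠ ⊤) :
    (∫⁻ t in Ioi 0, g t ≠ ⊤) ↔ (∑' n : ℕ, g n ≠ ⊤) := by
  rw [setLIntegral_Ioi_zero_eq_tsum_Ioc]
  constructor
  · intro h
    rw [tsum_eq_zero_add' ENNReal.summable, Nat.cast_zero]
    refine ENNReal.add_ne_top.2 ⟨h0, ne_top_of_le_ne_top h (ENNReal.tsum_le_tsum fun n => ?_)⟩
    simpa using hg.le_setLIntegral_Ioc_add_one n
  · exact fun h =>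
      ne_top_of_le_ne_top h (ENNReal.tsum_le_tsum fun n => hg.setLIntegral_Ioc_add_one_le n)

lemma Antitone.setLIntegral_Ioi_ne_top_iff_tsum_comp_mul (hg : Antitone g) (h0 : g 0 ≠ ⊤)
    {c : ℝ} (hc : 0 < c) : (∫⁻ t in Ioi 0, g t ≠ ⊤) ↔ (∑' n : ℕ, g (c * n) ≠ ⊤) := by
  have hgc : Antitone fun t => g (c * t) := hg.comp_monotone (monotone_mul_left_of_nonneg hc.le)
  rw [← hgc.setLIntegral_Ioi_ne_top_iff_tsum (by simpa using h0),
    setLIntegral_Ioi_zero_comp_mul_left g hc]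
  simp [ENNReal.mul_eq_top, hc]

end Antitone

theorem series_iff_choquet_general {Ω : Type*} (V : Set Ω → ℝ≥0∞)
    (hle : ∀ A : Set Ω, V A ≤ 1)
    (hmono : ∀ A B : Set Ω, A ⊆ B → V A ≤ V B)
    (X : Ω → ℝ) (hX : ∀ ω, 0 ≤ X ω) (δ : ℝ) (hδ : 0 < δ) :
    (∑' n : ℕ, V {ω | δ * lilSeq n ≤ X ω} ≠ ⊤) ↔
      (∫⁻ t in Set.Ioi (0 : ℝ), V {ω | t < X ω ^ 2 / llog (llog (X ω))} ≠ ⊤) := by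
  set G : ℝ → ℝ≥0∞ := fun t => V {ω | t < X ω ^ 2 / llog (llog (X ω))}
  have hG : Antitone G := fun s t hst => hmono _ _ fun ω hω => hst.trans_lt hω
  have hV : ∀ A, V A ≠ ⊤ := fun A => ne_top_of_le_ne_top ENNReal.one_ne_top (hle A)
  constructor
  · intro hF
    refine (hG.setLIntegral_Ioi_ne_top_iff_tsum_comp_mul (hV _) (c := max 1 (4 * δ ^ 2))
      (by positivity)).2 (ne_top_of_le_ne_top hF (ENNReal.tsum_le_tsum fun n => ?_))
    exact hmono _ _ fun ω hω => mul_lilSeq_le_of_mul_lt (hX ω) hω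
  · intro hI
    refine ENNReal.tsum_ne_top_of_eventually_le (fun n => hV _) ?_
      ((hG.setLIntegral_Ioi_ne_top_iff_tsum_comp_mul (hV _) (c := min 1 (2 * δ ^ 2) / 2)
        (by positivity)).1 hI)
    filter_upwards [eventually_ge_atTop 1] with n hn
    exact hmono _ _ fun ω hω => mul_lt_sq_div_of_mul_lilSeq_le hδ hn hω

theorem series_iff_choquet {Ω : Type*} (V : Set Ω → ℝ≥0∞)
    (hempty : V ∅ = 0) (huniv : V Set.univ = 1) (hle : ∀ A : Set Ω, V A ≤ 1)
    (hmono : ∀ A B : Set Ω, A ⊆ B → V A ≤ V B)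
    (X : Ω → ℝ) (hX : ∀ ω, 0 ≤ X ω) (δ : ℝ) (hδ : 0 < δ) :
    (∑' n : ℕ, V {ω | δ * lilSeq n ≤ X ω} ≠ ⊤) ↔
      (∫⁻ t in Set.Ioi (0 : ℝ), V {ω | t < X ω ^ 2 / llog (llog (X ω))} ≠ ⊤) :=
  series_iff_choquet_general V hle hmono X hX δ hδ
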